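/- Assume Hypothesis (H0), let β ≥ 0, and let y be a classical solution of the damped degenerate wave equation. Then the energy E_y is nonincreasing on [0,∞) and is differentiable with dE_y(t)/dt = −y_t(t,1)² for all t ≥ 0. -/

import Mathlib

open MeasureTheory Set Filter Topology

/-- The Feller weight `η(x) = exp (∫_{1/2}^x b/a)`. -/
noncomputable def etaW (a b : ℝ → ℝ) (x : ℝ) : ℝ :=
  Real.exp (∫ s in (1/2 : ℝ)..x, b s / a s)

/-- The weight `σ = a / η`. -/
noncomputable def sigW (a b : ℝ → ℝ) (x : ℝ) : ℝ :=
  a x / etaW a b x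

/-- `u ∈ H¹(0,1)` with (a.e.) derivative `u'`. -/
structure MemH1 (u u' : ℝ → ℝ) : Prop where
  cont : ContinuousOn u (Set.Icc 0 1)
  hasDeriv : ∀ᵐ x ∂(volume.restrict (Set.Ioo (0:ℝ) 1)), HasDerivAt u (u' x) x
  deriv_sq_int : IntegrableOn (fun x => (u' x) ^ 2) (Set.Ioo (0:ℝ) 1)
  ftc : ∀ x ∈ Set.Icc (0:ℝ) 1, u x = u 0 + ∫ t in Set.Ioo (0:ℝ) x, u' t

/-- `u ∈ L²_{1/σ}(0,1)`. -/
def MemL2sig (a b u : ℝ → ℝ) : Prop :=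
  IntegrableOn (fun x => (u x) ^ 2) (Set.Ioo (0:ℝ) 1) ∧
  IntegrableOn (fun x => (u x) ^ 2 / sigW a b x) (Set.Ioo (0:ℝ) 1)

/-- `u ∈ H¹_{1/σ}(0,1)`. -/
structure MemH1sig (a b u u' : ℝ → ℝ) extends MemH1 u u' : Prop where
  l2sig : MemL2sig a b u

/-- `u ∈ H¹_{1/σ,0}(0,1)`. -/
structure MemH1sig0 (a b u u' : ℝ → ℝ) extends MemH1sig a b u u' : Prop where
  zero : u 0 = 0

/-- `u ∈ H²_{1/σ}(0,1)`: `η u'` is locally absolutely continuous on `(0,1]`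
with derivative `w`, and `Au = σ (η u')' = σ w ∈ L²_{1/σ}`. -/
structure MemH2sig (a b u u' w : ℝ → ℝ) extends MemH1sig a b u u' : Prop where
  w_locint : ∀ c ∈ Set.Ioc (0:ℝ) 1, IntegrableOn w (Set.Icc c 1)
  locAC : ∀ c ∈ Set.Ioc (0:ℝ) 1, ∀ x ∈ Set.Icc c 1,
    etaW a b x * u' x = etaW a b c * u' c + ∫ t in Set.Ioo c x, w t
  Au_l2sig : MemL2sig a b (fun x => sigW a b x * w x)

/-- `u ∈ H²_{1/σ,0}(0,1)`. -/
structure MemH2sig0 (a b u u' w : ℝ → ℝ) extends MemH2sig a b u u' w : Prop where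
  zero : u 0 = 0

/-- Hypothesis (H0): there is `K > 0` such that `x ↦ x^K / a x` is nondecreasing
in a right neighborhood of `0`. -/
def HypH0K (a : ℝ → ℝ) (K : ℝ) : Prop :=
  0 < K ∧ ∃ ε > (0:ℝ), ∀ x y : ℝ, 0 < x → x ≤ y → y ≤ ε →
    x ^ K / a x ≤ y ^ K / a y

def HypH0 (a : ℝ → ℝ) : Prop := ∃ K : ℝ, HypH0K a K

/-- `a` is weakly degenerate at `0` with constant
`K = sup_{x ∈ (0,1]} x|a'(x)|/a(x) ∈ (0,1)`. -/
def IsWD (a a' : ℝ → ℝ) (K : ℝ) : Prop :=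
  ContinuousOn a (Set.Icc 0 1) ∧ a 0 = 0 ∧ (∀ x ∈ Set.Ioc (0:ℝ) 1, 0 < a x) ∧
  (∀ x ∈ Set.Ioc (0:ℝ) 1, HasDerivAt a (a' x) x) ∧
  ContinuousOn a' (Set.Ioc 0 1) ∧
  IsLUB ((fun x => x * |a' x| / a x) '' Set.Ioc (0:ℝ) 1) K ∧ 0 < K ∧ K < 1

/-- `a` is strongly degenerate at `0` with constant
`K = sup_{x ∈ (0,1]} x|a'(x)|/a(x) ∈ [1,2)`. -/
def IsSD (a a' : ℝ → ℝ) (K : ℝ) : Prop :=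
  ContinuousOn a (Set.Icc 0 1) ∧ a 0 = 0 ∧ (∀ x ∈ Set.Ioc (0:ℝ) 1, 0 < a x) ∧
  (∀ x ∈ Set.Icc (0:ℝ) 1, HasDerivWithinAt a (a' x) (Set.Icc 0 1) x) ∧
  ContinuousOn a' (Set.Icc 0 1) ∧
  IsLUB ((fun x => x * |a' x| / a x) '' Set.Ioc (0:ℝ) 1) K ∧ 1 ≤ K ∧ K < 2

/-- Hypothesis (H1): `b/a ∈ L¹(0,1)`, `b` continuous, `a` is (WD) or (SD) with
constant `K`, and if `K > 1` then `x b(x)/a(x) ∈ L^∞(0,1)`. -/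
def HypH1 (a a' b : ℝ → ℝ) (K : ℝ) : Prop :=
  (IsWD a a' K ∨ IsSD a a' K) ∧ ContinuousOn b (Set.Icc 0 1) ∧
  MeasureTheory.IntegrableOn (fun x => b x / a x) (Set.Ioo (0:ℝ) 1) ∧
  (1 < K → ∃ M : ℝ, ∀ x ∈ Set.Ioo (0:ℝ) 1, |x * b x / a x| ≤ M)

/-- Hypothesis (H2): (H1) and `(2-K) a(x) - 2x|b(x)| ≥ ε₀ a(x)` on `[0,1]`. -/
def HypH2 (a a' b : ℝ → ℝ) (K ε₀ : ℝ) : Prop :=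
  HypH1 a a' b K ∧ 0 < ε₀ ∧
  ∀ x ∈ Set.Icc (0:ℝ) 1, ε₀ * a x ≤ (2 - K) * a x - 2 * x * |b x|

/-- A classical solution of the damped degenerate wave equation
`y_tt = a y_xx + b y_x`, `y(t,0) = 0`, `y_t(t,1) + η(1) y_x(t,1) + β y(t,1) = 0`,
with the regularity, integrability and differentiation-under-the-integral
properties required of classical solutions. -/
structure ClassicalSol (a b : ℝ → ℝ) (β : ℝ)
    (y yt yx ytt ytx yxx : ℝ → ℝ → ℝ) : Prop where
  dt : ∀ t x, 0 ≤ t → x ∈ Set.Icc (0:ℝ) 1 → HasDerivAt (fun s => y s x) (yt t x) t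
  dtt : ∀ t x, 0 ≤ t → x ∈ Set.Icc (0:ℝ) 1 → HasDerivAt (fun s => yt s x) (ytt t x) t
  dx : ∀ t x, 0 ≤ t → x ∈ Set.Ioc (0:ℝ) 1 → HasDerivAt (fun ξ => y t ξ) (yx t x) x
  dtx : ∀ t x, 0 ≤ t → x ∈ Set.Ioc (0:ℝ) 1 → HasDerivAt (fun ξ => yt t ξ) (ytx t x) x
  dxx : ∀ t x, 0 ≤ t → x ∈ Set.Ioc (0:ℝ) 1 → HasDerivAt (fun ξ => yx t ξ) (yxx t x) x
  cont_tt : ContinuousOn (Function.uncurry ytt) (Set.Ici 0 ×ˢ Set.Ioc (0:ℝ) 1)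
  cont_tx : ContinuousOn (Function.uncurry ytx) (Set.Ici 0 ×ˢ Set.Ioc (0:ℝ) 1)
  cont_xx : ContinuousOn (Function.uncurry yxx) (Set.Ici 0 ×ˢ Set.Ioc (0:ℝ) 1)
  pde : ∀ t x, 0 < t → x ∈ Set.Ioo (0:ℝ) 1 → ytt t x = a x * yxx t x + b x * yx t x
  bc0 : ∀ t, 0 ≤ t → y t 0 = 0
  bc1 : ∀ t, 0 < t → yt t 1 + etaW a b 1 * yx t 1 + β * y t 1 = 0
  regx : ∀ t, 0 ≤ t → MemH2sig0 a b (y t) (yx t)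
    (fun x => etaW a b x * (b x / a x * yx t x + yxx t x))
  regt : ∀ t, 0 ≤ t → MemH1sig0 a b (yt t) (ytx t)
  ediff : ∀ t, 0 ≤ t → HasDerivAt
    (fun s => ∫ x in Set.Ioo (0:ℝ) 1,
      ((yt s x) ^ 2 / sigW a b x + etaW a b x * (yx s x) ^ 2))
    (∫ x in Set.Ioo (0:ℝ) 1,
      (2 * yt t x * ytt t x / sigW a b x + 2 * etaW a b x * yx t x * ytx t x)) t
  intQ : ∀ s T : ℝ, 0 < s → s < T →
    MeasureTheory.IntegrableOn
      (fun p : ℝ × ℝ => (yt p.1 p.2) ^ 2 / sigW a b p.2)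
      (Set.Ioo s T ×ˢ Set.Ioo (0:ℝ) 1) ∧
    MeasureTheory.IntegrableOn
      (fun p : ℝ × ℝ => etaW a b p.2 * (yx p.1 p.2) ^ 2)
      (Set.Ioo s T ×ˢ Set.Ioo (0:ℝ) 1)
  intBdry : ∀ s T : ℝ, 0 < s → s < T →
    MeasureTheory.IntegrableOn (fun t => (yt t 1) ^ 2) (Set.Ioo s T) ∧
    MeasureTheory.IntegrableOn (fun t => (yx t 1) ^ 2) (Set.Ioo s T) ∧
    MeasureTheory.IntegrableOn (fun t => (y t 1) ^ 2) (Set.Ioo s T)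

/-- The energy of a solution `y`:
`E_y(t) = (1/2) [∫₀¹ (y_t²/σ + η y_x²) dx + β y(t,1)²]`. -/
noncomputable def energy (a b : ℝ → ℝ) (β : ℝ) (y yt yx : ℝ → ℝ → ℝ) (t : ℝ) : ℝ :=
  (1/2) * ((∫ x in Set.Ioo (0:ℝ) 1,
    ((yt t x) ^ 2 / sigW a b x + etaW a b x * (yx t x) ^ 2)) + β * (y t 1) ^ 2)

section Aux

open intervalIntegral

lemma etaW_pos (a b : ℝ → ℝ) (x : ℝ) : 0 < etaW a b x := Real.exp_pos _

lemma sigW_pos {a : ℝ → ℝ} (b : ℝ → ℝ) (hapos : ∀ x ∈ Set.Ioc (0:ℝ) 1, 0 < a x)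
    {x : ℝ} (hx : x ∈ Set.Ioc (0:ℝ) 1) : 0 < sigW a b x :=
  div_pos (hapos x hx) (etaW_pos a b x)

lemma ba_int' {a b : ℝ → ℝ} (hba : IntegrableOn (fun x => b x / a x) (Set.Ioo (0:ℝ) 1)) :
    IntegrableOn (fun x => b x / a x) (Set.Ioc (0:ℝ) 1) :=
  (integrableOn_Ioc_iff_integrableOn_Ioo enorm_ne_top).2 hba

lemma uIoc_sub {x : ℝ} (hx0 : 0 ≤ x) (hx1 : x ≤ 1) :
    Set.uIoc (1/2 : ℝ) x ⊆ Set.Ioc (0:ℝ) 1 := by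
  rw [Set.uIoc]
  exact Set.Ioc_subset_Ioc (le_min (by norm_num) hx0) (max_le (by norm_num) hx1)

lemma etaW_le {a b : ℝ → ℝ} (hba : IntegrableOn (fun x => b x / a x) (Set.Ioo (0:ℝ) 1))
    {x : ℝ} (hx : x ∈ Set.Icc (0:ℝ) 1) :
    etaW a b x ≤ Real.exp (∫ s in Set.Ioc (0:ℝ) 1, ‖b s / a s‖) := by
  apply Real.exp_le_exp.2
  calc ∫ s in (1/2 : ℝ)..x, b s / a s
      ≤ ‖∫ s in (1/2 : ℝ)..x, b s / a s‖ := le_abs_self _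
    _ ≤ ∫ s in Set.uIoc (1/2 : ℝ) x, ‖b s / a s‖ :=
        intervalIntegral.norm_integral_le_integral_norm_uIoc
    _ ≤ ∫ s in Set.Ioc (0:ℝ) 1, ‖b s / a s‖ := by
        apply MeasureTheory.setIntegral_mono_set (ba_int' hba).norm
        · exact Filter.Eventually.of_forall fun s => norm_nonneg _
        · exact (HasSubset.Subset.eventuallyLE (uIoc_sub hx.1 hx.2))

lemma etaW_contAt {a b : ℝ → ℝ} (ha : ContinuousOn a (Set.Icc 0 1))
    (hb : ContinuousOn b (Set.Icc 0 1)) (hapos : ∀ x ∈ Set.Ioc (0:ℝ) 1, 0 < a x)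
    (hba : IntegrableOn (fun x => b x / a x) (Set.Ioo (0:ℝ) 1))
    {x : ℝ} (hx : x ∈ Set.Ioo (0:ℝ) 1) : ContinuousAt (etaW a b) x := by
  have hconta : ContinuousOn (fun s => b s / a s) (Set.Ioo (0:ℝ) 1) :=
    (hb.mono Set.Ioo_subset_Icc_self).div (ha.mono Set.Ioo_subset_Icc_self)
      (fun s hs => (hapos s ⟨hs.1, hs.2.le⟩).ne')
  have hint : IntervalIntegrable (fun s => b s / a s) volume (1/2) x := by
    rw [intervalIntegrable_iff]
    exact (ba_int' hba).mono_set (uIoc_sub hx.1.le hx.2.le)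
  have hca : ContinuousAt (fun s => b s / a s) x :=
    hconta.continuousAt (isOpen_Ioo.mem_nhds hx)
  have hd := intervalIntegral.integral_hasDerivAt_right hint
    (hconta.stronglyMeasurableAtFilter isOpen_Ioo x hx) hca
  exact Real.continuous_exp.continuousAt.comp hd.continuousAt

end Aux
section Key

open intervalIntegral

set_option maxHeartbeats 1000000 in
lemma key_pos (a b : ℝ → ℝ) (β : ℝ) (y yt yx ytt ytx yxx : ℝ → ℝ → ℝ)
    (ha : ContinuousOn a (Set.Icc 0 1)) (hb : ContinuousOn b (Set.Icc 0 1))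
    (hapos : ∀ x ∈ Set.Ioc (0:ℝ) 1, 0 < a x)
    (hba : IntegrableOn (fun x => b x / a x) (Set.Ioo (0:ℝ) 1))
    (hy : ClassicalSol a b β y yt yx ytt ytx yxx)
    {t : ℝ} (ht : 0 < t) :
    HasDerivAt (energy a b β y yt yx) (-(yt t 1) ^ 2) t := by
  set η := etaW a b with hηdef
  set σ := sigW a b with hσdef
  set w : ℝ → ℝ := fun x => η x * (b x / a x * yx t x + yxx t x) with hwdef
  have hrx := hy.regx t ht.le
  have hrt := hy.regt t ht.le
  set eU := Real.exp (∫ s in Set.Ioc (0:ℝ) 1, ‖b s / a s‖) with heU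
  have heUpos : 0 < eU := Real.exp_pos _
  have hηle : ∀ x ∈ Set.Icc (0:ℝ) 1, η x ≤ eU := fun x hx => etaW_le hba hx
  have hηpos : ∀ x : ℝ, 0 < η x := etaW_pos a b
  have hσpos : ∀ x ∈ Set.Ioo (0:ℝ) 1, 0 < σ x :=
    fun x hx => sigW_pos b hapos ⟨hx.1, hx.2.le⟩
  -- continuity facts on (0,1)
  have hηCt : ∀ x ∈ Set.Ioo (0:ℝ) 1, ContinuousAt η x :=
    fun x hx => etaW_contAt ha hb hapos hba hx
  have hyxCt : ∀ x ∈ Set.Ioo (0:ℝ) 1, ContinuousAt (yx t) x :=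
    fun x hx => (hy.dxx t x ht.le ⟨hx.1, hx.2.le⟩).continuousAt
  have hprodnhds : ∀ x ∈ Set.Ioo (0:ℝ) 1,
      (Set.Ici (0:ℝ) ×ˢ Set.Ioc (0:ℝ) 1) ∈ 𝓝 ((t, x) : ℝ × ℝ) := by
    intro x hx
    apply Filter.mem_of_superset ((isOpen_Ioi.prod isOpen_Ioo).mem_nhds (show ((t,x) : ℝ × ℝ) ∈ Set.Ioi (0:ℝ) ×ˢ Set.Ioo (0:ℝ) 1 from ⟨ht, hx⟩))
    exact Set.prod_mono Set.Ioi_subset_Ici_self Set.Ioo_subset_Ioc_self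
  have hyxxCt : ∀ x ∈ Set.Ioo (0:ℝ) 1, ContinuousAt (yxx t) x := by
    intro x hx
    exact (hy.cont_xx.continuousAt (hprodnhds x hx)).comp
      ((Continuous.prodMk_right t).continuousAt)
  have hytxCt : ∀ x ∈ Set.Ioo (0:ℝ) 1, ContinuousAt (ytx t) x := by
    intro x hx
    exact (hy.cont_tx.continuousAt (hprodnhds x hx)).comp
      ((Continuous.prodMk_right t).continuousAt)
  have hbaCt : ∀ x ∈ Set.Ioo (0:ℝ) 1, ContinuousAt (fun s => b s / a s) x := by
    intro x hx
    have h1 : Set.Icc (0:ℝ) 1 ∈ 𝓝 x := Icc_mem_nhds hx.1 hx.2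
    exact (hb.continuousAt h1).div (ha.continuousAt h1)
      (hapos x ⟨hx.1, hx.2.le⟩).ne'
  have hwCt : ∀ x ∈ Set.Ioo (0:ℝ) 1, ContinuousAt w x := by
    intro x hx
    exact (hηCt x hx).mul (((hbaCt x hx).mul (hyxCt x hx)).add (hyxxCt x hx))
  have hytCt : ∀ x ∈ Set.Ioo (0:ℝ) 1, ContinuousAt (yt t) x :=
    fun x hx => (hy.dtx t x ht.le ⟨hx.1, hx.2.le⟩).continuousAt
  set h : ℝ → ℝ := fun x => ytx t x * (η x * yx t x) + yt t x * w x with hhdef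
  have hhCt : ∀ x ∈ Set.Ioo (0:ℝ) 1, ContinuousAt h x := by
    intro x hx
    exact ((hytxCt x hx).mul ((hηCt x hx).mul (hyxCt x hx))).add
      ((hytCt x hx).mul (hwCt x hx))
  have hhCont : ContinuousOn h (Set.Ioo (0:ℝ) 1) :=
    fun x hx => (hhCt x hx).continuousWithinAt
  -- integrability of h on (0,1)
  have hηbd : ∀ᵐ x ∂(volume.restrict (Set.Ioo (0:ℝ) 1)), ‖η x‖ ≤ eU := by
    rw [MeasureTheory.ae_restrict_iff' measurableSet_Ioo]
    exact Filter.Eventually.of_forall fun x hx => by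
      rw [Real.norm_eq_abs, abs_of_pos (hηpos x)]
      exact hηle x (Set.Ioo_subset_Icc_self hx)
  have hηContOn : ContinuousOn η (Set.Ioo (0:ℝ) 1) :=
    fun x hx => (hηCt x hx).continuousWithinAt
  have hηmeas : AEStronglyMeasurable η (volume.restrict (Set.Ioo (0:ℝ) 1)) :=
    hηContOn.aestronglyMeasurable measurableSet_Ioo
  have hg1 : IntegrableOn (fun x => η x * (ytx t x) ^ 2) (Set.Ioo (0:ℝ) 1) :=
    hrt.deriv_sq_int.bdd_mul hηmeas hηbd
  have hg2 : IntegrableOn (fun x => η x * (yx t x) ^ 2) (Set.Ioo (0:ℝ) 1) :=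
    hrx.deriv_sq_int.bdd_mul hηmeas hηbd
  have hg3 : IntegrableOn (fun x => (yt t x) ^ 2 / σ x) (Set.Ioo (0:ℝ) 1) :=
    hrt.l2sig.2
  have hg4 : IntegrableOn (fun x => (σ x * w x) ^ 2 / σ x) (Set.Ioo (0:ℝ) 1) :=
    hrx.Au_l2sig.2
  have hgInt : IntegrableOn (fun x => (η x * (ytx t x) ^ 2 + η x * (yx t x) ^ 2
      + ((yt t x) ^ 2 / σ x + (σ x * w x) ^ 2 / σ x)) / 2) (Set.Ioo (0:ℝ) 1) :=
    ((hg1.add hg2).add (hg3.add hg4)).div_const 2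
  have hbound : ∀ x ∈ Set.Ioo (0:ℝ) 1, ‖h x‖ ≤ (η x * (ytx t x) ^ 2 + η x * (yx t x) ^ 2
      + ((yt t x) ^ 2 / σ x + (σ x * w x) ^ 2 / σ x)) / 2 := by
    intro x hx
    have hσx := hσpos x hx
    have hηx := hηpos x
    have h1 : |ytx t x * (η x * yx t x)| ≤ (η x * (ytx t x) ^ 2 + η x * (yx t x) ^ 2) / 2 := by
      have : |ytx t x * (η x * yx t x)| = η x * (|ytx t x| * |yx t x|) := by
        rw [abs_mul (ytx t x) (η x * yx t x), abs_mul (η x) (yx t x),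
          abs_of_pos hηx]; ring
      rw [this]
      nlinarith [sq_nonneg (|ytx t x| - |yx t x|), sq_abs (ytx t x), sq_abs (yx t x),
        abs_nonneg (ytx t x), abs_nonneg (yx t x)]
    have h2 : |yt t x * w x| ≤ ((yt t x) ^ 2 / σ x + (σ x * w x) ^ 2 / σ x) / 2 := by
      have h0 : 2 * σ x * (|yt t x| * |w x|) ≤ (yt t x) ^ 2 + σ x ^ 2 * (w x) ^ 2 := by
        nlinarith [sq_nonneg (|yt t x| - σ x * |w x|), sq_abs (yt t x), sq_abs (w x)]
      rw [abs_mul]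
      calc |yt t x| * |w x| ≤ ((yt t x) ^ 2 + σ x ^ 2 * (w x) ^ 2) / (2 * σ x) := by
            rw [le_div_iff₀ (by positivity)]; linarith
        _ = ((yt t x) ^ 2 / σ x + (σ x * w x) ^ 2 / σ x) / 2 := by
            field_simp
    rw [Real.norm_eq_abs]
    calc |ytx t x * (η x * yx t x) + yt t x * w x|
        ≤ |ytx t x * (η x * yx t x)| + |yt t x * w x| := abs_add_le _ _
      _ ≤ _ := by linarith
  have hInt_h : IntegrableOn h (Set.Ioo (0:ℝ) 1) := by
    apply MeasureTheory.Integrable.mono' hgInt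
      (hhCont.aestronglyMeasurable measurableSet_Ioo)
    rw [MeasureTheory.ae_restrict_iff' measurableSet_Ioo]
    exact Filter.Eventually.of_forall hbound
  set G : ℝ → ℝ := fun x => yt t x * (η x * yx t x) with hGdef
  have hFTC : ∀ c ∈ Set.Ioo (0:ℝ) 1, ∫ s in c..1, h s = G 1 - G c := by
    intro c hc
    have hc0 : (0:ℝ) < c := hc.1
    have hc1 : c ≤ 1 := hc.2.le
    have hcmem : c ∈ Set.Ioc (0:ℝ) 1 := ⟨hc0, hc1⟩
    have hreprEq : ∀ x ∈ Set.Icc c 1,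
        η c * yx t c + ∫ s in Set.Ioc c x, w s = η x * yx t x := by
      intro x hxm
      rw [MeasureTheory.integral_Ioc_eq_integral_Ioo]
      exact (hrx.locAC c hcmem x hxm).symm
    have hcontP : ContinuousOn (fun x => η x * yx t x) (Set.Icc c 1) :=
      (continuousOn_const.add
        (intervalIntegral.continuousOn_primitive (hrx.w_locint c hcmem))).congr
        (fun x hx => (hreprEq x hx).symm)
    have hcontG : ContinuousOn G (Set.Icc c 1) :=
      (hrt.cont.mono (Set.Icc_subset_Icc hc0.le le_rfl)).mul hcontP
    have hderivG : ∀ x ∈ Set.Ioo c 1, HasDerivWithinAt G (h x) (Set.Ioi x) x := by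
      intro x hxm
      have hx01 : x ∈ Set.Ioo (0:ℝ) 1 := ⟨hc0.trans hxm.1, hxm.2⟩
      have hyt' : HasDerivAt (fun ξ => yt t ξ) (ytx t x) x :=
        hy.dtx t x ht.le ⟨hx01.1, hx01.2.le⟩
      have hintw : IntervalIntegrable w volume c x := by
        rw [intervalIntegrable_iff]
        apply (hrx.w_locint c hcmem).mono_set
        rw [Set.uIoc_of_le hxm.1.le]
        exact Set.Ioc_subset_Icc_self.trans (Set.Icc_subset_Icc le_rfl hx01.2.le)
      have hwContOn : ContinuousOn w (Set.Ioo (0:ℝ) 1) :=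
        fun z hz => (hwCt z hz).continuousWithinAt
      have hP : HasDerivAt (fun ξ => ∫ s in c..ξ, w s) (w x) x :=
        intervalIntegral.integral_hasDerivAt_right hintw
          (hwContOn.stronglyMeasurableAtFilter isOpen_Ioo x hx01) (hwCt x hx01)
      have heq : (fun ξ => η ξ * yx t ξ) =ᶠ[𝓝 x]
          (fun ξ => η c * yx t c + ∫ s in c..ξ, w s) := by
        apply Filter.eventuallyEq_of_mem (isOpen_Ioo.mem_nhds hxm)
        intro ξ hξ
        show η ξ * yx t ξ = η c * yx t c + ∫ s in c..ξ, w s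
        rw [intervalIntegral.integral_of_le hξ.1.le]
        exact (hreprEq ξ ⟨hξ.1.le, hξ.2.le⟩).symm
      have hηyx : HasDerivAt (fun ξ => η ξ * yx t ξ) (w x) x :=
        (HasDerivAt.const_add (η c * yx t c) hP).congr_of_eventuallyEq heq
      exact (hyt'.mul hηyx).hasDerivWithinAt
    have hinth : IntervalIntegrable h volume c 1 :=
      (intervalIntegrable_iff_integrableOn_Ioo_of_le hc1).2
        (hInt_h.mono_set (Set.Ioo_subset_Ioo hc0.le le_rfl))
    exact intervalIntegral.integral_eq_sub_of_hasDeriv_right_of_le hc1 hcontG hderivG hinth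
  have hint01 : IntervalIntegrable h volume 0 1 :=
    (intervalIntegrable_iff_integrableOn_Ioo_of_le zero_le_one).2 hInt_h
  have hPhi : ContinuousWithinAt (fun c => ∫ s in (1:ℝ)..c, h s) (Set.Icc 0 1) 0 := by
    apply intervalIntegral.continuousWithinAt_primitive (measure_singleton 0)
    rw [min_eq_right zero_le_one, max_self]
    exact hint01
  set L : ℝ := G 1 + ∫ s in (1:ℝ)..(0:ℝ), h s with hLdef
  have hGtend : Filter.Tendsto G (𝓝[Set.Ioo (0:ℝ) 1] 0) (𝓝 L) := by
    have h1 : Filter.Tendsto (fun c => G 1 + ∫ s in (1:ℝ)..c, h s)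
        (𝓝[Set.Ioo (0:ℝ) 1] 0) (𝓝 L) :=
      Filter.Tendsto.const_add _
        (hPhi.mono_left (nhdsWithin_mono _ Set.Ioo_subset_Icc_self))
    apply h1.congr'
    filter_upwards [self_mem_nhdsWithin] with c hc
    rw [intervalIntegral.integral_symm, hFTC c hc]
    ring
  set C2 : ℝ := ∫ x in Set.Ioo (0:ℝ) 1, (ytx t x) ^ 2 with hC2def
  have hC2nonneg : 0 ≤ C2 :=
    MeasureTheory.setIntegral_nonneg measurableSet_Ioo (fun x _ => sq_nonneg _)
  have hytxContOn : ContinuousOn (ytx t) (Set.Ioo (0:ℝ) 1) :=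
    fun z hz => (hytxCt z hz).continuousWithinAt
  have hytxAbsInt : IntegrableOn (fun s => |ytx t s|) (Set.Ioo (0:ℝ) 1) := by
    have hdom : IntegrableOn (fun s => ((1:ℝ) + (ytx t s) ^ 2) / 2) (Set.Ioo (0:ℝ) 1) :=
      ((MeasureTheory.integrableOn_const measure_Ioo_lt_top.ne enorm_ne_top).add
        hrt.deriv_sq_int).div_const 2
    apply MeasureTheory.Integrable.mono' hdom
      (hytxContOn.abs.aestronglyMeasurable measurableSet_Ioo)
    rw [MeasureTheory.ae_restrict_iff' measurableSet_Ioo]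
    apply Filter.Eventually.of_forall
    intro s _
    rw [Real.norm_eq_abs, abs_abs]
    nlinarith [sq_nonneg (|ytx t s| - 1), sq_abs (ytx t s)]
  have hytsq : ∀ x ∈ Set.Ioc (0:ℝ) 1, (yt t x) ^ 2 ≤ C2 * x := by
    intro x hxm
    have hrep : yt t x = ∫ s in Set.Ioo (0:ℝ) x, ytx t s := by
      have h1 := hrt.ftc x ⟨hxm.1.le, hxm.2⟩
      rw [h1, hrt.zero, zero_add]
    have hIntx : IntegrableOn (fun s => |ytx t s|) (Set.Ioo (0:ℝ) x) :=
      hytxAbsInt.mono_set (Set.Ioo_subset_Ioo le_rfl hxm.2)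
    have hsq : IntegrableOn (fun s => (ytx t s) ^ 2) (Set.Ioo (0:ℝ) x) :=
      hrt.deriv_sq_int.mono_set (Set.Ioo_subset_Ioo le_rfl hxm.2)
    have hvol : (volume (Set.Ioo (0:ℝ) x)).toReal = x := by
      rw [Real.volume_Ioo, sub_zero, ENNReal.toReal_ofReal hxm.1.le]
    have habs : ∀ r : ℝ, 0 < r → |yt t x| ≤ (x * r + C2 / r) / 2 := by
      intro r hr
      have step1 : |yt t x| ≤ ∫ s in Set.Ioo (0:ℝ) x, |ytx t s| := by
        rw [hrep]
        simpa [Real.norm_eq_abs] using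
          MeasureTheory.norm_integral_le_integral_norm
            (μ := volume.restrict (Set.Ioo (0:ℝ) x)) (ytx t)
      have step2 : ∫ s in Set.Ioo (0:ℝ) x, |ytx t s|
          ≤ ∫ s in Set.Ioo (0:ℝ) x, (r + (ytx t s) ^ 2 / r) / 2 := by
        apply MeasureTheory.setIntegral_mono_on hIntx
          (((MeasureTheory.integrableOn_const measure_Ioo_lt_top.ne enorm_ne_top).add
            (hsq.div_const r)).div_const 2) measurableSet_Ioo
        intro s _
        have h4 : |ytx t s| ≤ ((ytx t s) ^ 2 + r ^ 2) / (2 * r) := by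
          rw [le_div_iff₀ (by positivity)]
          nlinarith [sq_nonneg (|ytx t s| - r), sq_abs (ytx t s)]
        calc |ytx t s| ≤ ((ytx t s) ^ 2 + r ^ 2) / (2 * r) := h4
          _ = (r + (ytx t s) ^ 2 / r) / 2 := by field_simp; ring
      have step3 : ∫ s in Set.Ioo (0:ℝ) x, (r + (ytx t s) ^ 2 / r) / 2
          = (x * r + (∫ s in Set.Ioo (0:ℝ) x, (ytx t s) ^ 2) / r) / 2 := by
        rw [MeasureTheory.integral_div]
        rw [MeasureTheory.integral_add
          (μ := volume.restrict (Set.Ioo (0:ℝ) x)) (g := fun s => (ytx t s) ^ 2 / r)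
          (MeasureTheory.integrableOn_const measure_Ioo_lt_top.ne enorm_ne_top)
          (hsq.div_const r)]
        rw [MeasureTheory.integral_div, MeasureTheory.setIntegral_const, MeasureTheory.measureReal_def, hvol,
          smul_eq_mul, mul_comm]
      have step4 : (∫ s in Set.Ioo (0:ℝ) x, (ytx t s) ^ 2) ≤ C2 :=
        MeasureTheory.setIntegral_mono_set hrt.deriv_sq_int
          (Filter.Eventually.of_forall fun s => sq_nonneg _)
          (HasSubset.Subset.eventuallyLE (Set.Ioo_subset_Ioo le_rfl hxm.2))
      calc |yt t x| ≤ _ := step1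
        _ ≤ _ := step2
        _ = _ := step3
        _ ≤ (x * r + C2 / r) / 2 := by gcongr
    rcases eq_or_ne (yt t x) 0 with h0 | h0
    · rw [h0]
      simpa using mul_nonneg hC2nonneg hxm.1.le
    · have hu : 0 < |yt t x| := abs_pos.2 h0
      have hr : 0 < |yt t x| / x := div_pos hu hxm.1
      have h1 := habs _ hr
      have hxr : x * (|yt t x| / x) = |yt t x| := by
        rw [mul_comm, div_mul_eq_mul_div, mul_div_assoc, div_self hxm.1.ne', mul_one]
      have hcr : C2 / (|yt t x| / x) = C2 * x / |yt t x| := by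
        rw [div_div_eq_mul_div]
      rw [hxr, hcr] at h1
      have h5 : |yt t x| * |yt t x| ≤ C2 * x := by
        rw [← le_div_iff₀ hu]
        linarith
      calc (yt t x) ^ 2 = |yt t x| * |yt t x| := by rw [← sq_abs]; ring
        _ ≤ C2 * x := h5
  have hL0 : L = 0 := by
    by_contra hL0
    have habsL : 0 < |L| / 2 := by
      have := abs_pos.2 hL0
      linarith
    have hev : ∀ᶠ c in 𝓝[Set.Ioo (0:ℝ) 1] 0, |L| / 2 < |G c| := by
      have h1 : Filter.Tendsto (fun c => |G c|) (𝓝[Set.Ioo (0:ℝ) 1] 0) (𝓝 |L|) :=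
        hGtend.abs
      exact h1.eventually_const_lt (by linarith [abs_pos.2 hL0])
    obtain ⟨sset, hsmem, hs⟩ := hev.exists_mem
    rw [mem_nhdsWithin] at hsmem
    obtain ⟨U, hUopen, hU0, hUsub⟩ := hsmem
    obtain ⟨ε, hε, hball⟩ := Metric.isOpen_iff.1 hUopen 0 hU0
    set δ := min ε 1 with hδdef
    have hδpos : 0 < δ := lt_min hε one_pos
    have hδ1 : δ ≤ 1 := min_le_right _ _
    have hδsub : ∀ z ∈ Set.Ioo (0:ℝ) δ, |L| / 2 < |G z| := by
      intro z hz
      apply hs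
      apply hUsub
      constructor
      · apply hball
        rw [Metric.mem_ball, Real.dist_eq, sub_zero, abs_of_pos hz.1]
        exact hz.2.trans_le (min_le_left _ _)
      · exact ⟨hz.1, hz.2.trans_le hδ1⟩
    have hC2pos : 0 < C2 := by
      have hz0 : (δ/2) ∈ Set.Ioo (0:ℝ) δ := ⟨by positivity, by linarith⟩
      have h8 := hδsub _ hz0
      have h9 : yt t (δ/2) ≠ 0 := by
        intro h9
        have : G (δ/2) = 0 := by rw [hGdef]; simp [h9]
        rw [this] at h8
        simp at h8
        linarith
      have h11 := hytsq (δ/2) ⟨by positivity, by linarith⟩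
      nlinarith [sq_pos_of_ne_zero h9, hδpos]
    set k : ℝ := (|L| / 2) ^ 2 / (C2 * eU) with hkdef
    have hkpos : 0 < k := by positivity
    have hclaim : ∀ z ∈ Set.Ioo (0:ℝ) δ, k * z⁻¹ ≤ η z * (yx t z) ^ 2 := by
      intro z hz
      have hz01 : z ∈ Set.Ioo (0:ℝ) 1 := ⟨hz.1, hz.2.trans_le hδ1⟩
      have hGz := hδsub z hz
      have hyt2 : (yt t z) ^ 2 ≤ C2 * z := hytsq z ⟨hz01.1, hz01.2.le⟩
      have hA : (|L| / 2) ^ 2 < (yt t z) ^ 2 * (η z * yx t z) ^ 2 := by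
        have hGabs : |G z| = |yt t z| * |η z * yx t z| := by rw [hGdef]; exact abs_mul _ _
        calc (|L| / 2) ^ 2 < |G z| ^ 2 := by
              apply pow_lt_pow_left₀ hGz habsL.le
              norm_num
          _ = (yt t z) ^ 2 * (η z * yx t z) ^ 2 := by
              rw [hGabs, mul_pow, sq_abs, sq_abs]
      have h6 : (|L| / 2) ^ 2 < C2 * z * (η z * yx t z) ^ 2 :=
        hA.trans_le (mul_le_mul_of_nonneg_right hyt2 (sq_nonneg _))
      have h7 : (η z * yx t z) ^ 2 / eU ≤ η z * (yx t z) ^ 2 := by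
        rw [div_le_iff₀ heUpos]
        have h71 : (η z * yx t z) ^ 2 = η z * (yx t z) ^ 2 * η z := by ring
        rw [h71]
        exact mul_le_mul_of_nonneg_left (hηle z (Set.Ioo_subset_Icc_self hz01))
          (mul_nonneg (hηpos z).le (sq_nonneg _))
      have hzpos : 0 < z := hz.1
      have h9 : k * z⁻¹ ≤ (η z * yx t z) ^ 2 / eU := by
        rw [hkdef, div_mul_eq_mul_div, div_le_div_iff₀ (mul_pos hC2pos heUpos) heUpos]
        have h10 : (|L| / 2) ^ 2 * (z⁻¹ * eU)
            ≤ (C2 * z * (η z * yx t z) ^ 2) * (z⁻¹ * eU) :=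
          mul_le_mul_of_nonneg_right h6.le (mul_nonneg (inv_nonneg.2 hzpos.le) heUpos.le)
        have h11 : (C2 * z * (η z * yx t z) ^ 2) * (z⁻¹ * eU)
            = (η z * yx t z) ^ 2 * (C2 * eU) := by
          have hzz : z * z⁻¹ = 1 := mul_inv_cancel₀ hzpos.ne'
          calc (C2 * z * (η z * yx t z) ^ 2) * (z⁻¹ * eU)
              = (z * z⁻¹) * (C2 * ((η z * yx t z) ^ 2 * eU)) := by ring
            _ = (η z * yx t z) ^ 2 * (C2 * eU) := by rw [hzz]; ring
        calc (|L| / 2) ^ 2 * z⁻¹ * eU = (|L| / 2) ^ 2 * (z⁻¹ * eU) := by ring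
          _ ≤ _ := h10
          _ = _ := h11
      exact le_trans h9 h7
    have hIntk : IntegrableOn (fun z : ℝ => k * z⁻¹) (Set.Ioo (0:ℝ) δ) := by
      apply MeasureTheory.Integrable.mono' (hg2.mono_set (Set.Ioo_subset_Ioo le_rfl hδ1))
      · exact (measurable_inv.const_mul k).aestronglyMeasurable
      · rw [MeasureTheory.ae_restrict_iff' measurableSet_Ioo]
        apply Filter.Eventually.of_forall
        intro z hz
        rw [Real.norm_eq_abs,
          abs_of_pos (mul_pos hkpos (inv_pos.2 hz.1))]
        exact hclaim z hz
    have hIntinv : IntegrableOn (fun z : ℝ => z⁻¹) (Set.Ioo (0:ℝ) δ) := by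
      have h12 := hIntk.const_mul k⁻¹
      have h13 : (fun z : ℝ => k⁻¹ * (k * z⁻¹)) = fun z : ℝ => z⁻¹ := by
        funext z
        rw [← mul_assoc, inv_mul_cancel₀ hkpos.ne', one_mul]
      rwa [h13] at h12
    have hIntrpow : IntegrableOn (fun z : ℝ => z ^ (-1 : ℝ)) (Set.Ioo (0:ℝ) δ) :=
      hIntinv.congr_fun (fun z _ => (Real.rpow_neg_one z).symm) measurableSet_Ioo
    have := (integrableOn_Ioo_rpow_iff hδpos).1 hIntrpow
    linarith
  -- value of the integral of h over (0,1)
  have hIoo01 : ∫ s in Set.Ioo (0:ℝ) 1, h s = G 1 := by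
    have h1 : ∫ s in (1:ℝ)..(0:ℝ), h s = -∫ s in Set.Ioo (0:ℝ) 1, h s := by
      rw [intervalIntegral.integral_symm 0 1, intervalIntegral.integral_of_le zero_le_one,
        MeasureTheory.integral_Ioc_eq_integral_Ioo]
    have h2 : G 1 + ∫ s in (1:ℝ)..(0:ℝ), h s = 0 := by rw [← hLdef]; exact hL0
    rw [h1] at h2
    linarith
  have hIntEq : (∫ x in Set.Ioo (0:ℝ) 1,
      (2 * yt t x * ytt t x / sigW a b x + 2 * etaW a b x * yx t x * ytx t x)) = 2 * G 1 := by
    have hcongr : ∀ x ∈ Set.Ioo (0:ℝ) 1,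
        2 * yt t x * ytt t x / sigW a b x + 2 * etaW a b x * yx t x * ytx t x
        = 2 * h x := by
      intro x hx
      have haxne : a x ≠ 0 := (hapos x ⟨hx.1, hx.2.le⟩).ne'
      have hηne : η x ≠ 0 := (hηpos x).ne'
      have hσne : σ x ≠ 0 := (hσpos x hx).ne'
      have hpde := hy.pde t x ht hx
      have hsw : σ x * w x = ytt t x := by
        rw [hpde, hwdef, hσdef]
        show sigW a b x * (η x * (b x / a x * yx t x + yxx t x)) = _
        rw [sigW]
        show a x / η x * (η x * (b x / a x * yx t x + yxx t x)) = _
        field_simp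
        ring
      rw [← hsw]
      show 2 * yt t x * (σ x * w x) / σ x + 2 * η x * yx t x * ytx t x
        = 2 * (ytx t x * (η x * yx t x) + yt t x * w x)
      field_simp
      ring
    calc (∫ x in Set.Ioo (0:ℝ) 1,
        (2 * yt t x * ytt t x / sigW a b x + 2 * etaW a b x * yx t x * ytx t x))
        = ∫ x in Set.Ioo (0:ℝ) 1, 2 * h x :=
          MeasureTheory.setIntegral_congr_fun measurableSet_Ioo hcongr
      _ = 2 * ∫ x in Set.Ioo (0:ℝ) 1, h x := by rw [MeasureTheory.integral_const_mul]
      _ = 2 * G 1 := by rw [hIoo01]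
  -- assemble the derivative
  have hI := hy.ediff t ht.le
  rw [hIntEq] at hI
  have hy1mem : (1:ℝ) ∈ Set.Icc (0:ℝ) 1 := ⟨zero_le_one, le_rfl⟩
  have hBd : HasDerivAt (fun s => β * (y s 1) ^ 2) (β * (2 * y t 1 * yt t 1)) t := by
    have h1 := ((hy.dt t 1 ht.le hy1mem).fun_pow 2).const_mul β
    exact h1.congr_deriv (by norm_num)
  have hE := (hI.add hBd).const_mul (1/2 : ℝ)
  have hval : (1/2 : ℝ) * (2 * G 1 + β * (2 * y t 1 * yt t 1)) = -(yt t 1) ^ 2 := by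
    have hbc := hy.bc1 t ht
    rw [hGdef]
    show (1/2 : ℝ) * (2 * (yt t 1 * (etaW a b 1 * yx t 1)) + β * (2 * y t 1 * yt t 1))
      = -(yt t 1) ^ 2
    linear_combination (yt t 1) * hbc
  rw [hval] at hE
  exact hE

end Key
/-- The energy of a classical solution is nonincreasing, with
`dE_y/dt = -y_t(t,1)²`. -/
theorem stmt13 (a b : ℝ → ℝ) (β : ℝ) (y yt yx ytt ytx yxx : ℝ → ℝ → ℝ)
    (ha : ContinuousOn a (Set.Icc 0 1)) (hb : ContinuousOn b (Set.Icc 0 1))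
    (ha0 : a 0 = 0) (hapos : ∀ x ∈ Set.Ioc (0:ℝ) 1, 0 < a x)
    (hba : IntegrableOn (fun x => b x / a x) (Set.Ioo (0:ℝ) 1))
    (hH0 : HypH0 a) (hβ : 0 ≤ β)
    (hy : ClassicalSol a b β y yt yx ytt ytx yxx) :
    AntitoneOn (energy a b β y yt yx) (Set.Ici 0) ∧
    ∀ t : ℝ, 0 ≤ t →
      HasDerivAt (energy a b β y yt yx) (-(yt t 1) ^ 2) t := by
  have key : ∀ t : ℝ, 0 < t → HasDerivAt (energy a b β y yt yx) (-(yt t 1) ^ 2) t :=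
    fun t ht => key_pos a b β y yt yx ytt ytx yxx ha hb hapos hba hy ht
  have hy1mem : (1:ℝ) ∈ Set.Icc (0:ℝ) 1 := ⟨zero_le_one, le_rfl⟩
  have hBd : HasDerivAt (fun s => β * (y s 1) ^ 2) (β * (2 * y 0 1 * yt 0 1)) 0 := by
    have h1 := ((hy.dt 0 1 le_rfl hy1mem).fun_pow 2).const_mul β
    exact h1.congr_deriv (by norm_num)
  have hI := hy.ediff 0 le_rfl
  have hD0 : HasDerivAt (energy a b β y yt yx)
      ((1/2 : ℝ) * ((∫ x in Set.Ioo (0:ℝ) 1,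
        (2 * yt 0 x * ytt 0 x / sigW a b x + 2 * etaW a b x * yx 0 x * ytx 0 x))
        + β * (2 * y 0 1 * yt 0 1))) 0 := (hI.add hBd).const_mul (1/2 : ℝ)
  have hderiv0 : HasDerivAt (energy a b β y yt yx) (-(yt 0 1) ^ 2) 0 := by
    set D := (1/2 : ℝ) * ((∫ x in Set.Ioo (0:ℝ) 1,
        (2 * yt 0 x * ytt 0 x / sigW a b x + 2 * etaW a b x * yx 0 x * ytx 0 x))
        + β * (2 * y 0 1 * yt 0 1)) with hD
    suffices hDeq : D = -(yt 0 1) ^ 2 by rw [← hDeq]; exact hD0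
    have hEcont : ∀ s : ℝ, 0 ≤ s → ContinuousAt (energy a b β y yt yx) s := by
      intro s hs
      rcases hs.lt_or_eq with hlt | heq
      · exact (key s hlt).continuousAt
      · rw [← heq]; exact hD0.continuousAt
    set u : ℕ → ℝ := fun n => 1 / (n + 1) with hu
    have hupos : ∀ n, 0 < u n := fun n => by positivity
    have hutend : Filter.Tendsto u Filter.atTop (𝓝 0) :=
      tendsto_one_div_add_atTop_nhds_zero_nat
    have hmvt : ∀ n : ℕ, ∃ c ∈ Set.Ioo (0:ℝ) (u n),
        -(yt c 1) ^ 2 = (energy a b β y yt yx (u n) - energy a b β y yt yx 0)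
          / (u n - 0) := by
      intro n
      apply exists_hasDerivAt_eq_slope (energy a b β y yt yx) (fun s => -(yt s 1) ^ 2)
        (hupos n)
      · intro x hx
        exact (hEcont x hx.1).continuousWithinAt
      · intro x hx
        exact key x hx.1
    choose c hcmem hceq using hmvt
    have hc0 : Filter.Tendsto c Filter.atTop (𝓝 0) :=
      tendsto_of_tendsto_of_tendsto_of_le_of_le tendsto_const_nhds hutend
        (fun n => (hcmem n).1.le) (fun n => (hcmem n).2.le)
    have hyt1cont : ContinuousAt (fun s => yt s 1) 0 :=
      (hy.dtt 0 1 le_rfl hy1mem).continuousAt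
    have hlim1 : Filter.Tendsto (fun n => -(yt (c n) 1) ^ 2) Filter.atTop
        (𝓝 (-(yt 0 1) ^ 2)) := by
      have h1 : Filter.Tendsto (fun n => yt (c n) 1) Filter.atTop (𝓝 (yt 0 1)) :=
        hyt1cont.tendsto.comp hc0
      exact (h1.pow 2).neg
    have hlim2 : Filter.Tendsto (fun n => -(yt (c n) 1) ^ 2) Filter.atTop (𝓝 D) := by
      have hslope : Filter.Tendsto (slope (energy a b β y yt yx) 0) (𝓝[≠] 0) (𝓝 D) :=
        hasDerivAt_iff_tendsto_slope.1 hD0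
      have hcomp : Filter.Tendsto u Filter.atTop (𝓝[≠] 0) := by
        apply tendsto_nhdsWithin_of_tendsto_nhds_of_eventually_within _ hutend
        exact Filter.Eventually.of_forall (fun n => (hupos n).ne')
      have h2 := hslope.comp hcomp
      apply h2.congr
      intro n
      rw [Function.comp_apply, slope_def_field]
      exact (hceq n).symm
    exact tendsto_nhds_unique hlim2 hlim1
  have hcontIci : ContinuousOn (energy a b β y yt yx) (Set.Ici 0) := by
    intro s hs
    rcases (lt_or_eq_of_le (show (0:ℝ) ≤ s from hs)) with hlt | heq
    · exact (key s hlt).continuousAt.continuousWithinAt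
    · subst heq
      exact hderiv0.continuousAt.continuousWithinAt
  have hanti : AntitoneOn (energy a b β y yt yx) (Set.Ici 0) := by
    apply antitoneOn_of_deriv_nonpos (convex_Ici 0) hcontIci
    · intro x hx
      rw [interior_Ici] at hx
      exact (key x hx).differentiableAt.differentiableWithinAt
    · intro x hx
      rw [interior_Ici] at hx
      rw [(key x hx).deriv]
      exact neg_nonpos.2 (sq_nonneg _)
  refine ⟨hanti, fun t ht => ?_⟩
  rcases ht.lt_or_eq with hlt | heq
  · exact key t hlt
  · rw [← heq]
    exact hderiv0
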